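/- arXiv:2204.04389 — 5 statements merged into one kernel-verified Lean document; each statement's English description precedes it below -/
import Mathlib

section
/- Let G be an abelian topological group, A a subset of the character group Ĝ containing 0, n a positive integer, and g ∈ G. Then g belongs to the inverse polar ((n)A)^◁ (i.e., (χ₁+⋯+χₙ)(g) ∈ S₊ for all χ₁,…,χₙ ∈ A) if and only if χ(g) ∈ Sₙ = {z ∈ S : arg(z) ∈ [−π/(2n), π/(2n)]} for every χ ∈ A. -/
open scoped Pointwise Topology
open Complex Real

variable (G : Type*) [AddCommGroup G] [TopologicalSpace G] [IsTopologicalAddGroup G]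

/-- A (continuous) character of `G` with values in the circle group. -/
def IsChar (χ : G → Circle) : Prop :=
  Continuous χ ∧ ∀ x y : G, χ (x + y) = χ x * χ y

/-- `S₊ = {z ∈ S : Re z ≥ 0}`. -/
def Splus : Set Circle := {z | 0 ≤ (z : ℂ).re}

/-- The character group `Ĝ`, as a set of functions `G → Circle`. -/
def charSet : Set (G → Circle) := {χ | IsChar G χ}

/-- The inverse polar `B^◁ = {g ∈ G : χ(g) ∈ S₊ ∀ χ ∈ B}` of a set of characters. -/
def invPolar (B : Set (G → Circle)) : Set G := {g | ∀ χ ∈ B, χ g ∈ Splus}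

/-- The polar `A^▷ = {χ ∈ Ĝ : χ(A) ⊆ S₊}` of a subset of `G`. -/
def polarG (A : Set G) : Set (G → Circle) := {χ | IsChar G χ ∧ ∀ g ∈ A, χ g ∈ Splus}

/-- The `n`-fold sumset `(n)K` of a set of characters (written multiplicatively). -/
def mpow (K : Set (G → Circle)) : ℕ → Set (G → Circle)
  | 0 => {1}
  | n + 1 => mpow K n * K

/-- The `n`-fold sumset `(n)A` of a subset of `G`. -/
def addPow (A : Set G) : ℕ → Set G
  | 0 => {0}
  | n + 1 => addPow A n + A

/-- `C₍ₙ₎ = {g ∈ G : g, 2g, …, ng ∈ C}`. -/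
def seg (n : ℕ) (C : Set G) : Set G := {g | ∀ k ∈ Finset.Icc 1 n, k • g ∈ C}

/-- `Sₙ = {z ∈ S : arg z ∈ [-π/(2n), π/(2n)]}`. -/
def Sn (n : ℕ) : Set Circle := {z | Complex.arg (z : ℂ) ∈ Set.Icc (-(π / (2 * n))) (π / (2 * n))}

/-!
If `χ(g) = e^{iθ}` with `|θ| ≤ π/(2n)` for every `χ ∈ A`, then a sum of `n` characters of `A`
takes at `g` a value `e^{iθ}` with `|θ| ≤ π/2`, which lies in `S₊`. Conversely, since `0 ∈ A`
the multiples `χ, 2χ, …, nχ` all lie in `(n)A`, so `cos (k·arg χ(g)) ≥ 0` for `k = 1, …, n`;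
if `π/(2n) < |arg χ(g)| ≤ π/2` (the upper bound is the case `k = 1`), the first multiple
`k|arg χ(g)|` to exceed `π/2` is still at most `π` and has negative cosine.
-/

theorem Real.exists_cos_nat_mul_neg {θ : ℝ} {n : ℕ} (hθ : θ ≤ π / 2) (hnθ : π / 2 < n * θ) :
    ∃ k ∈ Finset.Icc 1 n, Real.cos (k * θ) < 0 := by
  have hθ0 : 0 < θ := by
    by_contra! h
    linarith [mul_nonpos_of_nonneg_of_nonpos n.cast_nonneg h, Real.pi_pos]
  set m := ⌊π / (2 * θ)⌋₊
  have hm_le : m * θ ≤ π / 2 := by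
    have := (le_div_iff₀ (by positivity)).1 (Nat.floor_le (by positivity : 0 ≤ π / (2 * θ)))
    linarith
  have hm_lt : π / 2 < (m + 1) * θ := by
    have := (div_lt_iff₀ (by positivity)).1 (Nat.lt_floor_add_one (π / (2 * θ)))
    linarith
  have hmn : m < n := by
    refine (Nat.floor_lt (by positivity)).2 ((div_lt_iff₀ (by positivity)).2 ?_)
    linarith [show (n : ℝ) * (2 * θ) = 2 * (n * θ) by ring]
  refine ⟨m + 1, Finset.mem_Icc.2 ⟨le_add_self, hmn⟩, ?_⟩
  push_cast
  exact Real.cos_neg_of_pi_div_two_lt_of_lt hm_lt (by linarith)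

namespace Circle

theorem re_exp (t : ℝ) : (Circle.exp t : ℂ).re = Real.cos t := by
  rw [Circle.coe_exp, Complex.exp_ofReal_mul_I_re]

theorem re_exp_nonneg {t : ℝ} (ht : |t| ≤ π / 2) : 0 ≤ (Circle.exp t : ℂ).re :=
  re_exp t ▸ Real.cos_nonneg_of_mem_Icc (abs_le.1 ht)

theorem re_pow_eq_cos_abs_arg (z : Circle) (k : ℕ) :
    ((z ^ k : Circle) : ℂ).re = Real.cos (k * |arg (z : ℂ)|) := by
  have hz : z ^ k = Circle.exp (k * arg (z : ℂ)) := by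
    rw [← nsmul_eq_mul, Circle.exp_nsmul, Circle.exp_arg]
  rw [hz, re_exp, ← Real.cos_abs, abs_mul, Nat.abs_cast]

theorem abs_arg_le_of_forall_re_pow_nonneg {z : Circle} {n : ℕ} (hn : 0 < n)
    (h : ∀ k ∈ Finset.Icc 1 n, 0 ≤ ((z ^ k : Circle) : ℂ).re) :
    |arg (z : ℂ)| ≤ π / (2 * n) := by
  have hz : |arg (z : ℂ)| ≤ π / 2 :=
    abs_arg_le_pi_div_two_iff.2 (by simpa using h 1 (Finset.mem_Icc.2 ⟨le_rfl, hn⟩))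
  by_contra! hlt
  have hnθ : π / 2 < n * |arg (z : ℂ)| := by
    rw [div_lt_iff₀ (by positivity)] at hlt
    linarith
  obtain ⟨k, hk, hcos⟩ := Real.exists_cos_nat_mul_neg hz hnθ
  exact hcos.not_ge (re_pow_eq_cos_abs_arg z k ▸ h k hk)

end Circle

theorem mem_Sn_iff {n : ℕ} {z : Circle} : z ∈ Sn n ↔ |arg (z : ℂ)| ≤ π / (2 * n) :=
  abs_le.symm

section

variable {G : Type*}

theorem pow_mem_mpow {A : Set (G → Circle)} (hA0 : 1 ∈ A) {χ : G → Circle} (hχ : χ ∈ A)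
    {k n : ℕ} (hkn : k ≤ n) : χ ^ k ∈ mpow G A n := by
  induction n generalizing k with
  | zero => simp [Nat.le_zero.1 hkn, mpow]
  | succ n ih =>
    rw [mpow]
    rcases hkn.lt_or_eq with hlt | rfl
    · exact mul_one (χ ^ k) ▸ Set.mul_mem_mul (ih (Nat.lt_succ_iff.1 hlt)) hA0
    · exact pow_succ χ n ▸ Set.mul_mem_mul (ih le_rfl) hχ

theorem exists_eq_exp_of_mem_mpow {A : Set (G → Circle)} {g : G} {c : ℝ}
    (hA : ∀ χ ∈ A, |arg (χ g : ℂ)| ≤ c) {m : ℕ} {ψ : G → Circle} (hψ : ψ ∈ mpow G A m) :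
    ∃ θ : ℝ, |θ| ≤ m * c ∧ ψ g = Circle.exp θ := by
  induction m generalizing ψ with
  | zero => exact ⟨0, by simp, by simp_all [mpow]⟩
  | succ m ih =>
    obtain ⟨φ, hφ, χ, hχ, rfl⟩ := hψ
    obtain ⟨θ, hθ, hφg⟩ := ih hφ
    refine ⟨θ + arg (χ g : ℂ), ?_, ?_⟩
    · calc |θ + arg (χ g : ℂ)| ≤ |θ| + |arg (χ g : ℂ)| := abs_add_le _ _
        _ ≤ m * c + c := add_le_add hθ (hA χ hχ)
        _ = (m + 1 : ℕ) * c := by push_cast; ring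
    · change φ g * χ g = _
      rw [hφg, Circle.exp_add, Circle.exp_arg]

end

theorem stmt0 (A : Set (G → Circle)) (hA0 : (1 : G → Circle) ∈ A)
    (n : ℕ) (hn : 0 < n) (g : G) :
    g ∈ invPolar G (mpow G A n) ↔ ∀ χ ∈ A, χ g ∈ Sn n := by
  simp only [mem_Sn_iff]
  constructor
  · intro hg χ hχ
    exact Circle.abs_arg_le_of_forall_re_pow_nonneg hn fun k hk =>
      hg (χ ^ k) (pow_mem_mpow hA0 hχ (Finset.mem_Icc.1 hk).2)
  · intro hS ψ hψ
    obtain ⟨θ, hθ, hψg⟩ := exists_eq_exp_of_mem_mpow hS hψ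
    have hn' : (n : ℝ) ≠ 0 := by positivity
    rw [Splus, Set.mem_ofPred_eq, hψg]
    exact Circle.re_exp_nonneg (hθ.trans_eq (by field_simp))
end

section
/- Let G be an abelian topological group, A ⊆ Ĝ with 0 ∈ A, and n a positive integer. Then (A^◁)₍ₙ₎ = ((n)A)^◁, where C₍ₙ₎ = {g ∈ G : g, 2g, …, ng ∈ C}. Consequently, the intersection ⋂ₙ (A^◁)₍ₙ₎ over all positive integers n is a subgroup of G. -/
open scoped Pointwise Topology
open Complex Real

variable (G : Type*) [AddCommGroup G] [TopologicalSpace G] [IsTopologicalAddGroup G]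

/-!
If `g, 2g, …, ng ∈ A^◁`, then for every `χ ∈ A` the argument `θ` of `χ g` satisfies
`n |θ| ≤ π / 2`: inductively, once `k |θ| ≤ π / 2` we get `(k + 1) |θ| ≤ π`, and then
`cos ((k + 1) θ) ≥ 0` forces `(k + 1) |θ| ≤ π / 2`. Hence a product of `n` values `χ g`
has argument at most `π / 2` in absolute value, i.e. lies in `S₊`. Conversely
`χ (k • g) = (χ ^ k) g` with `χ ^ k ∈ (n)A` for `k ≤ n`, because `1 ∈ A`.
Letting `n → ∞` forces `χ g = 1`, so `⋂ₙ (A^◁)₍ₙ₎` is the annihilator of `A`.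
-/

theorem Real.abs_le_pi_div_two_of_cos_nonneg {x : ℝ} (hx : |x| ≤ π) (hcos : 0 ≤ Real.cos x) :
    |x| ≤ π / 2 := by
  by_contra! h
  have := Real.cos_neg_of_pi_div_two_lt_of_lt h (by linarith [Real.pi_pos])
  rw [Real.cos_abs] at this
  linarith

theorem Real.nat_mul_abs_le_pi_div_two {θ : ℝ} (hθ : |θ| ≤ π) {n : ℕ} (hn : 1 ≤ n)
    (hcos : ∀ k ∈ Finset.Icc 1 n, 0 ≤ Real.cos (k * θ)) : n * |θ| ≤ π / 2 := by
  induction n, hn using Nat.le_induction with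
  | base =>
    simpa using Real.abs_le_pi_div_two_of_cos_nonneg hθ (by simpa using hcos 1 (by simp))
  | succ m hm ih =>
    have hm' : m * |θ| ≤ π / 2 := ih fun k hk ↦ hcos k (Finset.Icc_subset_Icc_right m.le_succ hk)
    have hcos' := hcos (m + 1) (by simp)
    have hle : |((m + 1 : ℕ) : ℝ) * θ| ≤ π := by
      rw [abs_mul, Nat.abs_cast]
      have : (1 : ℝ) ≤ m := by exact_mod_cast hm
      push_cast
      nlinarith [abs_nonneg θ]
    have := Real.abs_le_pi_div_two_of_cos_nonneg hle hcos'
    rwa [abs_mul, Nat.abs_cast] at this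

namespace Circle

theorem re_exp_s5 (x : ℝ) : (exp x : ℂ).re = Real.cos x := by
  rw [coe_exp, Complex.exp_ofReal_mul_I_re]

theorem nat_mul_abs_arg_le {z : Circle} {n : ℕ} (hn : 1 ≤ n)
    (h : ∀ k ∈ Finset.Icc 1 n, z ^ k ∈ Splus) : n * |arg (z : ℂ)| ≤ π / 2 := by
  refine Real.nat_mul_abs_le_pi_div_two (abs_arg_le_pi _) hn fun k hk ↦ ?_
  have hk := h k hk
  rwa [← exp_arg z, ← exp_natCast_mul, Splus, Set.mem_ofPred_eq, re_exp_s5] at hk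

theorem eq_one_of_forall_pow_mem_Splus {z : Circle} (h : ∀ k, 0 < k → z ^ k ∈ Splus) :
    z = 1 := by
  rw [← arg_eq_zero]
  by_contra hz
  have hpos : 0 < |arg (z : ℂ)| := abs_pos.2 hz
  obtain ⟨n, hn⟩ := exists_nat_gt (π / 2 / |arg (z : ℂ)|)
  have hn1 : 1 ≤ n := by
    have : (0 : ℝ) < n := lt_trans (by positivity) hn
    exact_mod_cast this
  have hle := nat_mul_abs_arg_le hn1 fun k hk ↦ h k (Finset.mem_Icc.1 hk).1
  rw [div_lt_iff₀ hpos] at hn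
  linarith

theorem image_exp_pow_subset (r : ℝ) (n : ℕ) :
    (exp '' {x | |x| ≤ r}) ^ n ⊆ exp '' {x | |x| ≤ n * r} := by
  induction n with
  | zero => simp
  | succ n ih =>
    rintro _ ⟨_, ha, _, ⟨y, hy, rfl⟩, rfl⟩
    obtain ⟨x, hx, rfl⟩ := ih ha
    refine ⟨x + y, ?_, exp_add x y⟩
    rw [Set.mem_ofPred_eq] at hx hy ⊢
    push_cast
    linarith [abs_add_le x y]

theorem image_exp_subset_Splus : exp '' {x | |x| ≤ π / 2} ⊆ Splus := by
  rintro _ ⟨x, hx, rfl⟩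
  rw [Splus, Set.mem_ofPred_eq, re_exp_s5]
  exact Real.cos_nonneg_of_neg_pi_div_two_le_of_le (abs_le.1 hx).1 (abs_le.1 hx).2

end Circle

section

variable {G}
omit [IsTopologicalAddGroup G]

def IsChar.toAddChar {χ : G → Circle} (hχ : IsChar G χ) : AddChar G Circle where
  toFun := χ
  map_zero_eq_one' := by simpa using hχ.2 0 0
  map_add_eq_mul' := hχ.2

theorem IsChar.map_zero {χ : G → Circle} (hχ : IsChar G χ) : χ 0 = 1 :=
  hχ.toAddChar.map_zero_eq_one

theorem IsChar.map_neg {χ : G → Circle} (hχ : IsChar G χ) (g : G) : χ (-g) = (χ g)⁻¹ :=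
  hχ.toAddChar.map_neg_eq_inv g

theorem IsChar.map_nsmul {χ : G → Circle} (hχ : IsChar G χ) (k : ℕ) (g : G) :
    χ (k • g) = χ g ^ k :=
  hχ.toAddChar.map_nsmul_eq_pow k g

omit [AddCommGroup G] [TopologicalSpace G] in
theorem mpow_eq_pow (K : Set (G → Circle)) (n : ℕ) : mpow G K n = K ^ n := by
  induction n with
  | zero => rfl
  | succ n ih => rw [mpow, ih, pow_succ]

omit [AddCommGroup G] [TopologicalSpace G] in
theorem mem_invPolar_iff_image_subset {B : Set (G → Circle)} {g : G} :
    g ∈ invPolar G B ↔ (fun χ ↦ χ g) '' B ⊆ Splus := by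
  rw [Set.image_subset_iff]; rfl

theorem mem_seg_invPolar_iff {A : Set (G → Circle)} (hA : A ⊆ charSet G) {n : ℕ} {g : G} :
    g ∈ seg G n (invPolar G A) ↔ ∀ χ ∈ A, ∀ k ∈ Finset.Icc 1 n, χ g ^ k ∈ Splus := by
  simp only [seg, invPolar, Set.mem_ofPred_eq]
  constructor
  · intro h χ hχ k hk
    rw [← IsChar.map_nsmul (hA hχ)]
    exact h k hk χ hχ
  · intro h k hk χ hχ
    rw [IsChar.map_nsmul (hA hχ)]
    exact h χ hχ k hk

theorem seg_invPolar_eq_invPolar_mpow {A : Set (G → Circle)} (hA : A ⊆ charSet G)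
    (hA0 : (1 : G → Circle) ∈ A) {n : ℕ} (hn : 0 < n) :
    seg G n (invPolar G A) = invPolar G (mpow G A n) := by
  ext g
  rw [mem_seg_invPolar_iff hA, mpow_eq_pow, mem_invPolar_iff_image_subset]
  constructor
  · intro h
    have harc : (fun χ ↦ χ g) '' A ⊆ Circle.exp '' {x | |x| ≤ π / (2 * n)} := by
      rintro _ ⟨χ, hχ, rfl⟩
      refine ⟨arg (χ g : ℂ), ?_, Circle.exp_arg _⟩
      have := Circle.nat_mul_abs_arg_le hn (h χ hχ)
      rw [Set.mem_ofPred_eq, le_div_iff₀ (by positivity)]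
      linarith
    have hnπ : (n : ℝ) * (π / (2 * n)) = π / 2 := by field_simp
    calc (fun χ ↦ χ g) '' A ^ n = ((fun χ ↦ χ g) '' A) ^ n :=
          Set.image_pow (Pi.evalMonoidHom (fun _ ↦ Circle) g) A n
      _ ⊆ (Circle.exp '' {x | |x| ≤ π / (2 * n)}) ^ n := Set.pow_subset_pow_left harc
      _ ⊆ Circle.exp '' {x | |x| ≤ π / 2} := hnπ ▸ Circle.image_exp_pow_subset _ n
      _ ⊆ Splus := Circle.image_exp_subset_Splus
  · intro h χ hχ k hk
    exact h ⟨χ ^ k, Set.pow_subset_pow_right hA0 (Finset.mem_Icc.1 hk).2 (Set.pow_mem_pow hχ), rfl⟩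

theorem iInter_seg_invPolar_eq {A : Set (G → Circle)} (hA : A ⊆ charSet G) :
    ⋂ (n : ℕ) (_ : 0 < n), seg G n (invPolar G A) = {g | ∀ χ ∈ A, χ g = 1} := by
  ext g
  simp only [Set.mem_iInter, Set.mem_ofPred_eq, mem_seg_invPolar_iff hA]
  constructor
  · intro h χ hχ
    exact Circle.eq_one_of_forall_pow_mem_Splus fun k hk ↦ h k hk χ hχ k (by simp; omega)
  · intro h n _ χ hχ k _
    rw [h χ hχ, one_pow, Splus, Set.mem_ofPred_eq, Circle.coe_one, Complex.one_re]
    exact zero_le_one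

theorem exists_addSubgroup_coe_eq {A : Set (G → Circle)} (hA : A ⊆ charSet G) :
    ∃ H : AddSubgroup G, (H : Set G) = {g | ∀ χ ∈ A, χ g = 1} :=
  ⟨{ carrier := {g | ∀ χ ∈ A, χ g = 1}
     add_mem' := fun ha hb χ hχ ↦ by rw [(hA hχ).2, ha χ hχ, hb χ hχ, one_mul]
     zero_mem' := fun χ hχ ↦ IsChar.map_zero (hA hχ)
     neg_mem' := fun hg χ hχ ↦ by rw [IsChar.map_neg (hA hχ), hg χ hχ, inv_one] }, rfl⟩

end

theorem stmt5 (A : Set (G → Circle)) (hA : A ⊆ charSet G)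
    (hA0 : (1 : G → Circle) ∈ A) :
    (∀ n : ℕ, 0 < n → seg G n (invPolar G A) = invPolar G (mpow G A n)) ∧
      ∃ H : AddSubgroup G,
        (H : Set G) = ⋂ (n : ℕ) (_ : 0 < n), seg G n (invPolar G A) := by
  refine ⟨fun n hn ↦ seg_invPolar_eq_invPolar_mpow hA hA0 hn, ?_⟩
  rw [iInter_seg_invPolar_eq hA]
  exact exists_addSubgroup_coe_eq hA
end

section
/- Let G be an abelian topological group, C ⊆ G with 0 ∈ C, and n a positive integer. Then ((n)·qc(C))^▷ = ((n)C)^▷, where qc(C) = C^▷◁ is the quasi-convex hull of C. Moreover qc((n)C) + qc((n)C) ⊆ qc((2n)C), and consequently X := ⋃ₙ qc((n)C) is a subgroup of G. -/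
open scoped Pointwise Topology
open Complex Real

variable (G : Type*) [AddCommGroup G] [TopologicalSpace G] [IsTopologicalAddGroup G]

/-- The quasi-convex hull `qc(C) = C^▷◁`. -/
def qcHull (C : Set G) : Set G := invPolar G (polarG G C)

/-!
A character `χ` with `χ((n)C) ⊆ S₊` has `χ(kc) ∈ S₊` for all `c ∈ C` and `k ≤ n`, so each `χ^k`,
`k ≤ n`, lies in `C^▷` and hence is nonnegative on `qc(C)`. A point of the circle whose first `n`
powers have nonnegative real part has angle at most `π / 2n`, so `χ` maps `qc(C)` into the arc of
half-width `π / 2n` and therefore `(n)qc(C)` into the arc of half-width `π / 2`, i.e. into `S₊`.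
Applied to `(n)C` with `n = 2` this gives `qc((n)C) + qc((n)C) ⊆ qc((2n)C)`; together with the
symmetry of polars and the monotonicity of `n ↦ qc((n)C)` this makes the union a subgroup.
-/

namespace Real

theorem abs_le_pi_div_two_of_cos_nonneg_s9 {x : ℝ} (hx : |x| ≤ π) (hc : 0 ≤ Real.cos x) :
    |x| ≤ π / 2 := by
  by_contra! h
  have : Real.cos |x| < 0 := cos_neg_of_pi_div_two_lt_of_lt h (by linarith [pi_pos])
  rw [cos_abs] at this
  linarith

theorem two_mul_nat_mul_abs_le_pi {θ : ℝ} (hθ : |θ| ≤ π) {n : ℕ}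
    (h : ∀ k ≤ n, 0 ≤ Real.cos (k * θ)) : 2 * n * |θ| ≤ π := by
  induction n with
  | zero => simpa using pi_pos.le
  | succ m ih =>
    have hm : 2 * m * |θ| ≤ π := ih fun k hk => h k (hk.trans m.le_succ)
    have hbound : |(m + 1 : ℝ) * θ| ≤ π := by
      rw [abs_mul, abs_of_nonneg (by positivity)]
      rcases m.eq_zero_or_pos with rfl | hpos
      · simpa using hθ
      · have : (1 : ℝ) ≤ m := by exact_mod_cast hpos
        nlinarith [abs_nonneg θ]
    have hcos : 0 ≤ Real.cos ((m + 1 : ℝ) * θ) := by exact_mod_cast h (m + 1) le_rfl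
    have := abs_le_pi_div_two_of_cos_nonneg_s9 hbound hcos
    rw [abs_mul, abs_of_nonneg (by positivity)] at this
    push_cast
    linarith

end Real

theorem inv_mem_Splus {z : Circle} (hz : z ∈ Splus) : z⁻¹ ∈ Splus := by
  change 0 ≤ ((z⁻¹ : Circle) : ℂ).re
  rwa [Circle.coe_inv_eq_conj, Complex.conj_re]

namespace Circle

/-- The closed counterpart of `Circle.centeredArc`. -/
noncomputable def closedCenteredArc (r : ℝ) : Set Circle :=
  Circle.exp '' {x | |x| ≤ r}

theorem one_mem_closedCenteredArc_zero : (1 : Circle) ∈ closedCenteredArc 0 :=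
  ⟨0, by simp, Circle.exp_zero⟩

theorem closedCenteredArc_mul_subset (r s : ℝ) :
    closedCenteredArc r * closedCenteredArc s ⊆ closedCenteredArc (r + s) := by
  rintro _ ⟨_, ⟨x, hx, rfl⟩, _, ⟨y, hy, rfl⟩, rfl⟩
  exact ⟨x + y, (abs_add_le x y).trans (add_le_add hx hy), exp_add x y⟩

theorem exp_mem_Splus_iff {x : ℝ} : Circle.exp x ∈ Splus ↔ 0 ≤ Real.cos x := by
  change 0 ≤ ((Circle.exp x : Circle) : ℂ).re ↔ _
  rw [coe_exp, Complex.exp_ofReal_mul_I_re]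

theorem closedCenteredArc_pi_div_two_subset_Splus : closedCenteredArc (π / 2) ⊆ Splus := by
  rintro _ ⟨x, hx, rfl⟩
  exact exp_mem_Splus_iff.2 (cos_nonneg_of_mem_Icc (abs_le.1 hx))

theorem mem_closedCenteredArc_of_forall_pow_mem_Splus {z : Circle} {n : ℕ} (hn : 0 < n)
    (h : ∀ k ≤ n, z ^ k ∈ Splus) : z ∈ closedCenteredArc (π / (2 * n)) := by
  refine ⟨arg z, ?_, exp_arg z⟩
  have hcos : ∀ k ≤ n, 0 ≤ Real.cos (k * arg z) := fun k hk => by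
    rw [← exp_mem_Splus_iff, ← nsmul_eq_mul, exp_nsmul, exp_arg]
    exact h k hk
  have := two_mul_nat_mul_abs_le_pi (Complex.abs_arg_le_pi z) hcos
  rw [Set.mem_ofPred_eq, le_div_iff₀ (by positivity), mul_comm]
  exact this

end Circle

section QuasiConvexHull

variable {G}
omit [IsTopologicalAddGroup G]

omit [TopologicalSpace G] in
theorem addPow_eq_nsmul (A : Set G) (n : ℕ) : addPow G A n = n • A := by
  induction n with
  | zero => rfl
  | succ n ih => rw [addPow, ih, succ_nsmul]

namespace IsChar

variable {χ : G → Circle}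

def toAddChar_s9 (hχ : IsChar G χ) : AddChar G Circle where
  toFun := χ
  map_zero_eq_one' := by simpa using hχ.2 0 0
  map_add_eq_mul' := hχ.2

theorem map_zero_s9 (hχ : IsChar G χ) : χ 0 = 1 :=
  hχ.toAddChar_s9.map_zero_eq_one

theorem map_nsmul_s9 (hχ : IsChar G χ) (k : ℕ) (g : G) : χ (k • g) = χ g ^ k :=
  hχ.toAddChar_s9.map_nsmul_eq_pow k g

theorem map_neg_s9 (hχ : IsChar G χ) (g : G) : χ (-g) = (χ g)⁻¹ :=
  hχ.toAddChar_s9.map_neg_eq_inv g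

theorem pow (hχ : IsChar G χ) (k : ℕ) : IsChar G (χ ^ k) :=
  ⟨hχ.1.pow k, fun x y => by simp only [Pi.pow_apply, hχ.2, mul_pow]⟩

theorem map_mem_closedCenteredArc_of_mem_nsmul (hχ : IsChar G χ) {A : Set G} {r : ℝ}
    (hA : ∀ g ∈ A, χ g ∈ Circle.closedCenteredArc r) {n : ℕ} {x : G} (hx : x ∈ n • A) :
    χ x ∈ Circle.closedCenteredArc (n * r) := by
  induction n generalizing x with
  | zero =>
    rw [zero_nsmul, Set.mem_zero] at hx
    rw [hx, hχ.map_zero_s9, Nat.cast_zero, zero_mul]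
    exact Circle.one_mem_closedCenteredArc_zero
  | succ n ih =>
    obtain ⟨y, hy, g, hg, rfl⟩ := hx
    rw [hχ.2, Nat.cast_succ, add_one_mul]
    exact Circle.closedCenteredArc_mul_subset _ _ (Set.mul_mem_mul (ih hy) (hA g hg))

end IsChar

theorem polarG_anti {A B : Set G} (h : A ⊆ B) : polarG G B ⊆ polarG G A :=
  fun _ hχ => ⟨hχ.1, fun g hg => hχ.2 g (h hg)⟩

theorem subset_qcHull (A : Set G) : A ⊆ qcHull G A :=
  fun _ hg _ hχ => hχ.2 _ hg

theorem qcHull_mono {A B : Set G} (h : A ⊆ B) : qcHull G A ⊆ qcHull G B :=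
  fun _ hg χ hχ => hg χ (polarG_anti h hχ)

theorem neg_mem_qcHull {A : Set G} {g : G} (hg : g ∈ qcHull G A) : -g ∈ qcHull G A :=
  fun χ hχ => by
    rw [hχ.1.map_neg_s9]
    exact inv_mem_Splus (hg χ hχ)

theorem pow_mem_polarG_of_mem_polarG_nsmul {A : Set G} (hA : (0 : G) ∈ A) {n k : ℕ}
    (hk : k ≤ n) {χ : G → Circle} (hχ : χ ∈ polarG G (n • A)) : χ ^ k ∈ polarG G A := by
  refine ⟨hχ.1.pow k, fun a ha => ?_⟩
  rw [Pi.pow_apply, ← hχ.1.map_nsmul_s9]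
  exact hχ.2 _ (Set.nsmul_subset_nsmul_right hA hk (Set.nsmul_mem_nsmul ha))

theorem map_mem_closedCenteredArc_of_mem_qcHull {A : Set G} (hA : (0 : G) ∈ A) {n : ℕ}
    (hn : 0 < n) {χ : G → Circle} (hχ : χ ∈ polarG G (n • A)) {g : G} (hg : g ∈ qcHull G A) :
    χ g ∈ Circle.closedCenteredArc (π / (2 * n)) :=
  Circle.mem_closedCenteredArc_of_forall_pow_mem_Splus hn fun _ hk =>
    hg _ (pow_mem_polarG_of_mem_polarG_nsmul hA hk hχ)

theorem polarG_nsmul_qcHull {A : Set G} (hA : (0 : G) ∈ A) (n : ℕ) :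
    polarG G (n • qcHull G A) = polarG G (n • A) := by
  refine Set.Subset.antisymm (polarG_anti (Set.nsmul_subset_nsmul_left (subset_qcHull A))) ?_
  rcases n.eq_zero_or_pos with rfl | hn
  · simp only [zero_nsmul, subset_refl]
  intro χ hχ
  refine ⟨hχ.1, fun x hx => Circle.closedCenteredArc_pi_div_two_subset_Splus ?_⟩
  have := hχ.1.map_mem_closedCenteredArc_of_mem_nsmul
    (fun g hg => map_mem_closedCenteredArc_of_mem_qcHull hA hn hχ hg) hx
  have hcancel : (n : ℝ) * (π / (2 * n)) = π / 2 := by field_simp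
  rwa [hcancel] at this

theorem nsmul_qcHull_subset {A : Set G} (hA : (0 : G) ∈ A) (n : ℕ) :
    n • qcHull G A ⊆ qcHull G (n • A) :=
  fun x hx χ hχ => subset_qcHull _ hx χ (by rwa [polarG_nsmul_qcHull hA])

theorem qcHull_nsmul_add_subset {A : Set G} (hA : (0 : G) ∈ A) (n : ℕ) :
    qcHull G (n • A) + qcHull G (n • A) ⊆ qcHull G ((2 * n) • A) := by
  rw [← two_nsmul, mul_nsmul']
  exact nsmul_qcHull_subset (Set.zero_mem_nsmul hA) 2

def qcHullSubgroup (C : Set G) (hC : (0 : G) ∈ C) : AddSubgroup G where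
  carrier := ⋃ (n : ℕ) (_ : 0 < n), qcHull G (n • C)
  zero_mem' := Set.mem_iUnion₂.2 ⟨1, one_pos, subset_qcHull _ (Set.zero_mem_nsmul hC)⟩
  add_mem' := by
    simp only [Set.mem_iUnion]
    rintro a b ⟨m, hm, ha⟩ ⟨n, hn, hb⟩
    have mono : ∀ {k}, k ≤ max m n → qcHull G (k • C) ⊆ qcHull G (max m n • C) :=
      fun hk => qcHull_mono (Set.nsmul_subset_nsmul_right hC hk)
    exact ⟨2 * max m n, by omega, qcHull_nsmul_add_subset hC _
      (Set.add_mem_add (mono (le_max_left m n) ha) (mono (le_max_right m n) hb))⟩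
  neg_mem' := by
    simp only [Set.mem_iUnion]
    rintro g ⟨n, hn, hg⟩
    exact ⟨n, hn, neg_mem_qcHull hg⟩

end QuasiConvexHull

theorem stmt9 (C : Set G) (hC0 : (0 : G) ∈ C) :
    (∀ n : ℕ, 0 < n →
        polarG G (addPow G (qcHull G C) n) = polarG G (addPow G C n)) ∧
      (∀ n : ℕ, 0 < n →
        qcHull G (addPow G C n) + qcHull G (addPow G C n) ⊆ qcHull G (addPow G C (2 * n))) ∧
      ∃ H : AddSubgroup G,
        (H : Set G) = ⋃ (n : ℕ) (_ : 0 < n), qcHull G (addPow G C n) := by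
  simp only [addPow_eq_nsmul]
  exact ⟨fun n _ => polarG_nsmul_qcHull hC0 n, fun n _ => qcHull_nsmul_add_subset hC0 n,
    qcHullSubgroup C hC0, rfl⟩
end

section
/- Let G be an abelian topological group and U a neighborhood of zero in G. Then the polar U^▷ = {χ ∈ Ĝ : χ(U) ⊆ S₊} is compact in the dual group Ĝ endowed with the compact-open topology, and hence also compact in the weak* topology σ(Ĝ, G). -/
open scoped Pointwise Topology
open Complex Real

variable (G : Type*) [AddCommGroup G] [TopologicalSpace G] [IsTopologicalAddGroup G]

/-!
On the circle, `Re z ≥ 0` gives `‖z + 1‖² = 2 + 2 Re z ≥ 2`, hence `2 ‖z - 1‖² ≤ ‖z² - 1‖²`.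
So if a homomorphism `f : G → S` maps `U` into `S₊` and `g, 2g, 4g, …, 2ⁿ⁻¹g ∈ U`, then
`2ⁿ ‖f g - 1‖² ≤ ‖f (2ⁿ g) - 1‖² ≤ 4`. These `g` form a neighbourhood of zero, so all such
homomorphisms, continuous or not, form an equicontinuous family. They are a closed subset of
the compact space `S^G`, and Arzelà–Ascoli turns this into compactness for the compact-open
topology; pointwise compactness is the compactness in `S^G` itself.
-/

lemma isClosed_splus : IsClosed Splus :=
  isClosed_Ici.preimage (continuous_re.comp continuous_subtype_val)

lemma Circle.dist_eq_norm (z w : Circle) : dist z w = ‖(z : ℂ) - w‖ :=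
  (Subtype.dist_eq z w).trans (Complex.dist_eq _ _)

lemma two_le_norm_add_one_sq {z : Circle} (hz : z ∈ Splus) : 2 ≤ ‖(z : ℂ) + 1‖ ^ 2 := by
  rw [Complex.sq_norm, normSq_add, Circle.normSq_coe, map_one, map_one, mul_one]
  linarith [show 0 ≤ (z : ℂ).re from hz]

lemma two_mul_dist_one_sq_le {z : Circle} (hz : z ∈ Splus) :
    2 * dist z 1 ^ 2 ≤ dist (z ^ 2) 1 ^ 2 := by
  have hfac : ((z ^ 2 : Circle) : ℂ) - 1 = ((z : ℂ) - 1) * ((z : ℂ) + 1) := by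
    push_cast; ring
  rw [Circle.dist_eq_norm, Circle.dist_eq_norm, Circle.coe_one, hfac, norm_mul, mul_pow, mul_comm]
  gcongr
  exact two_le_norm_add_one_sq hz

lemma pow_two_mul_dist_one_sq_le (n : ℕ) (z : Circle) (hz : ∀ k < n, z ^ 2 ^ k ∈ Splus) :
    2 ^ n * dist z 1 ^ 2 ≤ 4 := by
  induction n generalizing z with
  | zero =>
    have hdist : dist z 1 ≤ 2 := by
      rw [Circle.dist_eq_norm, ← one_add_one_eq_two]
      simpa [Circle.norm_coe] using norm_sub_le (z : ℂ) 1
    nlinarith [hdist, dist_nonneg (x := z) (y := 1)]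
  | succ n ih =>
    have hsq : 2 ^ n * dist (z ^ 2) 1 ^ 2 ≤ 4 :=
      ih (z ^ 2) fun k hk => by simpa [← pow_mul, ← pow_succ'] using hz (k + 1) (by omega)
    have hz_sq : 2 * dist z 1 ^ 2 ≤ dist (z ^ 2) 1 ^ 2 :=
      two_mul_dist_one_sq_le (by simpa using hz 0 (by omega))
    calc 2 ^ (n + 1) * dist z 1 ^ 2 = 2 ^ n * (2 * dist z 1 ^ 2) := by ring
      _ ≤ 2 ^ n * dist (z ^ 2) 1 ^ 2 := by gcongr
      _ ≤ 4 := hsq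

section

variable {A : Type*}

lemma map_zero_of_map_add [AddZeroClass A] {M : Type*} [LeftCancelMonoid M] {f : A → M}
    (hf : ∀ x y, f (x + y) = f x * f y) : f 0 = 1 :=
  left_eq_mul.mp (by rw [← hf 0 0, add_zero])

lemma map_nsmul_of_map_add [AddMonoid A] {M : Type*} [LeftCancelMonoid M] {f : A → M}
    (hf : ∀ x y, f (x + y) = f x * f y) (g : A) (n : ℕ) : f (n • g) = f g ^ n := by
  induction n with
  | zero => rw [zero_smul, pow_zero, map_zero_of_map_add hf]
  | succ n ih => rw [succ_nsmul, hf, ih, pow_succ]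

def homPolar [Add A] (U : Set A) : Set (A → Circle) :=
  {f | (∀ x y, f (x + y) = f x * f y) ∧ ∀ g ∈ U, f g ∈ Splus}

lemma isClosed_homPolar [Add A] (U : Set A) : IsClosed (homPolar U) := by
  simp only [homPolar, Set.ofPred_and, Set.ofPred_forall]
  exact (isClosed_iInter fun x => isClosed_iInter fun y =>
      isClosed_eq (continuous_apply (x + y)) ((continuous_apply x).mul (continuous_apply y))).inter
    (isClosed_iInter fun g => isClosed_iInter fun _ => isClosed_splus.preimage (continuous_apply g))

lemma isCompact_homPolar [Add A] (U : Set A) : IsCompact (homPolar U) :=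
  (isClosed_homPolar U).isCompact

lemma equicontinuousAt_zero_homPolar [AddMonoid A] [TopologicalSpace A] [ContinuousAdd A]
    {U : Set A} (hU : U ∈ 𝓝 0) :
    EquicontinuousAt (fun f : homPolar U => (f : A → Circle)) 0 := by
  refine Metric.equicontinuousAt_iff_right.2 fun ε hε => ?_
  obtain ⟨n, hn⟩ := pow_unbounded_of_one_lt (4 / ε ^ 2) one_lt_two
  rw [div_lt_iff₀ (by positivity)] at hn
  have hW : ∀ᶠ g in 𝓝 (0 : A), ∀ k ∈ Finset.range n, 2 ^ k • g ∈ U :=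
    (Filter.eventually_all_finset _).2 fun k _ =>
      (continuous_nsmul _).continuousAt.preimage_mem_nhds (by rwa [smul_zero])
  filter_upwards [hW] with g hg f
  rw [map_zero_of_map_add f.2.1, dist_comm]
  have hbound := pow_two_mul_dist_one_sq_le n (f.1 g) fun k hk =>
    map_nsmul_of_map_add f.2.1 g _ ▸ f.2.2 _ (hg k (Finset.mem_range.2 hk))
  exact lt_of_pow_lt_pow_left₀ 2 hε.le
    (lt_of_mul_lt_mul_left (hbound.trans_lt hn) (by positivity))

/-- `equicontinuous_of_equicontinuousAt_one` is stated for monoid homomorphisms, hence the detour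
through `Multiplicative A`. -/
def homPolar.toMonoidHom [AddGroup A] {U : Set A} (f : homPolar U) :
    Multiplicative A →* Circle where
  toFun x := f.1 x.toAdd
  map_one' := map_zero_of_map_add f.2.1
  map_mul' := f.2.1

variable [AddGroup A] [TopologicalSpace A] [IsTopologicalAddGroup A] {U : Set A}

lemma equicontinuous_homPolar (hU : U ∈ 𝓝 0) :
    Equicontinuous (fun f : homPolar U => (f : A → Circle)) :=
  equicontinuous_of_equicontinuousAt_one (G := Multiplicative A) homPolar.toMonoidHom
    (equicontinuousAt_zero_homPolar (A := A) hU)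

lemma image_coe_setOf_continuousMap_mem_homPolar (hU : U ∈ 𝓝 0) :
    (⇑) '' {χ : C(A, Circle) | ⇑χ ∈ homPolar U} = homPolar U :=
  Set.Subset.antisymm (Set.image_subset_iff.2 fun _ hχ => hχ)
    fun f hf => ⟨⟨f, (equicontinuous_homPolar hU).continuous ⟨f, hf⟩⟩, hf, rfl⟩

lemma isCompact_setOf_continuousMap_mem_homPolar (hU : U ∈ 𝓝 0) :
    IsCompact {χ : C(A, Circle) | ⇑χ ∈ homPolar U} :=
  ArzelaAscoli.isCompact_of_equicontinuous _
    ((image_coe_setOf_continuousMap_mem_homPolar hU).symm ▸ isCompact_homPolar U)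
    ((equicontinuous_homPolar hU).comp (Subtype.map DFunLike.coe fun _ hχ => hχ))

end

theorem stmt11 (U : Set G) (hU : U ∈ 𝓝 (0 : G)) :
    IsCompact {χ : C(G, Circle) |
        (∀ x y : G, χ (x + y) = χ x * χ y) ∧ ∀ g ∈ U, χ g ∈ Splus} ∧
      IsCompact ((fun χ : C(G, Circle) => (χ : G → Circle)) ''
        {χ : C(G, Circle) |
          (∀ x y : G, χ (x + y) = χ x * χ y) ∧ ∀ g ∈ U, χ g ∈ Splus}) :=
  ⟨isCompact_setOf_continuousMap_mem_homPolar hU,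
    (image_coe_setOf_continuousMap_mem_homPolar hU).symm ▸ isCompact_homPolar U⟩
end

section
/- Let (G, τ) and (H, ν) be MAP abelian topological groups and p : H → G a continuous surjective homomorphism such that τ is compatible with the quotient topology ν/ker(p) (i.e., they have the same continuous characters). Then the adjoint map p* : (Ĝ, σ(Ĝ,G)) → (Ĥ, σ(Ĥ,H)), p*(χ) = χ∘p, is a topological embedding whose image p*(Ĝ) is a closed subgroup of (Ĥ, σ(Ĥ,H)). -/
open scoped Pointwise Topology
open Complex Real

variable (G : Type*) [AddCommGroup G] [TopologicalSpace G] [IsTopologicalAddGroup G]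

/-! Pulling back along the surjection `p` is a topological embedding `(G → 𝕋) → (H → 𝕋)` of
product spaces, and `Ĝ`, `Ĥ` carry the subspace topologies. A character of `H` trivial on `ker p`
factors through `p`, and compatibility of `τ` with `ν / ker p` makes the factor continuous; so the
image of `Ĝ` is the annihilator of `ker p`, an intersection of the closed sets `{η | η h = 1}`. -/

section FactorThroughSurjection

variable {G H M : Type*} [AddGroup G] [AddGroup H] [Group M]
  {η : H → M} (hη : ∀ x y, η (x + y) = η x * η y) {p : H →+ G}

include hη

lemma map_zero_eq_one_of_map_add : η 0 = 1 :=
  mul_eq_left.mp (by rw [← hη 0 0, add_zero])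

lemma map_eq_map_of_ker (hker : ∀ h, p h = 0 → η h = 1) {a b : H} (hab : p a = p b) :
    η a = η b := by
  have hba : η (-a + b) = 1 := hker _ (by rw [map_add, map_neg, hab, neg_add_cancel])
  rw [← mul_one (η a), ← hba, ← hη, add_neg_cancel_left]

lemma exists_map_add_comp_eq_of_ker (hps : Function.Surjective p)
    (hker : ∀ h, p h = 0 → η h = 1) :
    ∃ χ : G → M, (∀ x y, χ (x + y) = χ x * χ y) ∧ χ ∘ p = η := by
  have hfac : ∀ h, η (Function.surjInv hps (p h)) = η h :=
    fun h => map_eq_map_of_ker hη hker (Function.surjInv_eq hps (p h))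
  refine ⟨η ∘ Function.surjInv hps, fun x y => ?_, funext hfac⟩
  obtain ⟨a, rfl⟩ := hps x
  obtain ⟨b, rfl⟩ := hps y
  simp only [Function.comp_apply, ← map_add, hfac, hη]

end FactorThroughSurjection

lemma range_eq_annihilator_ker {G H : Type*} [AddCommGroup G] [TopologicalSpace G]
    [IsTopologicalAddGroup G] [AddCommGroup H] [TopologicalSpace H] [IsTopologicalAddGroup H]
    (p : H →+ G) (hps : Function.Surjective p)
    (hcompat : ∀ χ : G → Circle, (∀ x y : G, χ (x + y) = χ x * χ y) →
      (Continuous χ ↔ Continuous (χ ∘ p)))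
    (Φ : {χ : G → Circle // IsChar G χ} → {η : H → Circle // IsChar H η})
    (hΦ : ∀ (χ : {χ : G → Circle // IsChar G χ}) (h : H), (Φ χ).1 h = χ.1 (p h)) :
    Set.range Φ = {η | ∀ h, p h = 0 → η.1 h = 1} := by
  ext η
  constructor
  · rintro ⟨χ, rfl⟩ h hh
    rw [hΦ, hh, map_zero_eq_one_of_map_add χ.2.2]
  · intro hker
    obtain ⟨χ, hχ, hχp⟩ := exists_map_add_comp_eq_of_ker η.2.2 hps hker
    refine ⟨⟨χ, (hcompat χ hχ).mpr (hχp ▸ η.2.1), hχ⟩, Subtype.ext (funext fun h => ?_)⟩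
    rw [hΦ]
    exact congrFun hχp h

theorem stmt14 {H : Type*} [AddCommGroup H] [TopologicalSpace H] [IsTopologicalAddGroup H]
    (p : H →+ G) (hps : Function.Surjective p)
    (hcompat : ∀ χ : G → Circle, (∀ x y : G, χ (x + y) = χ x * χ y) →
      (Continuous χ ↔ Continuous (χ ∘ p)))
    (Φ : {χ : G → Circle // IsChar G χ} → {η : H → Circle // IsChar H η})
    (hΦ : ∀ (χ : {χ : G → Circle // IsChar G χ}) (h : H), (Φ χ).1 h = χ.1 (p h)) :
    Topology.IsEmbedding Φ ∧ IsClosed (Set.range Φ) := by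
  have hval : Subtype.val ∘ Φ = (· ∘ p) ∘ Subtype.val := funext fun χ => funext (hΦ χ)
  constructor
  · rw [← Topology.IsEmbedding.subtypeVal.of_comp_iff, hval]
    exact (hps.isEmbedding_comp p).comp .subtypeVal
  · rw [range_eq_annihilator_ker p hps hcompat Φ hΦ]
    simp only [Set.ofPred_forall]
    exact isClosed_iInter fun h => isClosed_iInter fun _ =>
      isClosed_eq ((continuous_apply h).comp continuous_subtype_val) continuous_const
end
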